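/- arXiv:1107.5014 — 3 statements merged into one kernel-verified Lean document; each statement's English description precedes it below -/
import Mathlib

section
/- Conversely, if g2 is nowhere zero, b11, b21 are nowhere-zero differentiable with b11·b21 = g2, and b10, b20 : ℝ → ℝ with b20 differentiable satisfy g1 = b10·b21 + b11·b20 + b11·b21' and g0 = b10·b20 + b11·b20', then Y := b20 is a solution of the Riccati equation Y' - (b11/g2)·Y² + ((g1 - b11·b21')/g2)·Y - g0/b11 = 0. -/
theorem stmt_4 (g0 g1 g2 b10 b11 b20 b21 : ℝ → ℝ)
    (hg2 : ∀ x : ℝ, g2 x ≠ 0)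
    (hb11 : ∀ x : ℝ, b11 x ≠ 0) (hb21 : ∀ x : ℝ, b21 x ≠ 0)
    (hb11d : Differentiable ℝ b11) (hb21d : Differentiable ℝ b21)
    (hb20d : Differentiable ℝ b20)
    (hfac : ∀ x : ℝ, b11 x * b21 x = g2 x)
    (h1 : ∀ x : ℝ, g1 x = b10 x * b21 x + b11 x * b20 x + b11 x * deriv b21 x)
    (h0 : ∀ x : ℝ, g0 x = b10 x * b20 x + b11 x * deriv b20 x) :
    ∀ x : ℝ,
      deriv b20 x - (b11 x / g2 x) * b20 x ^ 2
        + ((g1 x - b11 x * deriv b21 x) / g2 x) * b20 x - g0 x / b11 x = 0 := by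
  intro x
  rw [h1 x, h0 x, ← hfac x]
  field_simp [hb11 x, hb21 x]
  ring
end

section
/- Let g01, g11, g12, g21, g22, g23, g24 : ℝ² → ℝ. The second-order operator P u = g01·u + g11·∂₁u + g12·∂₂u + g21·∂₁²u + (g22+g23)·∂₁∂₂u + g24·∂₂²u equals the composition (b10 + b11∂₁ + b12∂₂)∘(b20 + b21∂₁ + b22∂₂) on all C² functions if and only if: g21 = b11 b21, g22+g23 = b12 b21 + b11 b22, g24 = b12 b22, g11 = b10 b21 + b11 b20 + L(b21), g12 = b10 b22 + b12 b20 + L(b22), g01 = b10 b20 + L(b20), where L = b11∂₁ + b12∂₂. -/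
noncomputable def pd1 (f : ℝ × ℝ → ℝ) (p : ℝ × ℝ) : ℝ := fderiv ℝ f p (1, 0)

noncomputable def pd2 (f : ℝ × ℝ → ℝ) (p : ℝ × ℝ) : ℝ := fderiv ℝ f p (0, 1)

/-!
Expanding the composition by the Leibniz rule and the symmetry of second derivatives writes it
as a second-order operator whose coefficients are exactly the right-hand sides of the six
conditions; this gives "if". Conversely, the coefficients of a second-order operator at a point
`p` are determined by its action on `C²` functions, because the quadratic polynomial centred at
`p` realises any prescribed 2-jet at `p`.
-/

open ContinuousLinearMap

section Calculus

variable {𝕜 E F : Type*} [NontriviallyNormedField 𝕜] [NormedAddCommGroup E] [NormedSpace 𝕜 E]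
  [NormedAddCommGroup F] [NormedSpace 𝕜 F] {f : E → F} {x : E}

theorem fderiv_fderiv_apply_const (hf : DifferentiableAt 𝕜 (fderiv 𝕜 f) x) (v w : E) :
    fderiv 𝕜 (fun y => fderiv 𝕜 f y v) x w = fderiv 𝕜 (fderiv 𝕜 f) x w v := by
  rw [fderiv_clm_apply hf (differentiableAt_const v)]
  simp

theorem ContDiffAt.differentiableAt_fderiv_apply {n : WithTop ℕ∞} (hf : ContDiffAt 𝕜 n f x)
    (hn : 2 ≤ n) (v : E) : DifferentiableAt 𝕜 (fun y => fderiv 𝕜 f y v) x :=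
  ((hf.fderiv_right hn).differentiableAt one_ne_zero).clm_apply (differentiableAt_const v)

end Calculus

section PartialDerivatives

variable {f : ℝ × ℝ → ℝ} {p : ℝ × ℝ}

theorem pd1_pd2_comm {n : WithTop ℕ∞} (hf : ContDiffAt ℝ n f p) (hn : 2 ≤ n) :
    pd1 (pd2 f) p = pd2 (pd1 f) p := by
  have hdf : DifferentiableAt ℝ (fderiv ℝ f) p := (hf.fderiv_right hn).differentiableAt one_ne_zero
  calc pd1 (pd2 f) p = fderiv ℝ (fderiv ℝ f) p (1, 0) (0, 1) := fderiv_fderiv_apply_const hdf _ _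
    _ = fderiv ℝ (fderiv ℝ f) p (0, 1) (1, 0) := hf.isSymmSndFDerivAt (by simpa using hn) _ _
    _ = pd2 (pd1 f) p := (fderiv_fderiv_apply_const hdf _ _).symm

theorem pd1_eq_of_hasFDerivAt {a b : ℝ} (hf : HasFDerivAt f (a • fst ℝ ℝ ℝ + b • snd ℝ ℝ ℝ) p) :
    pd1 f p = a := by
  simp [pd1, hf.fderiv]

theorem pd2_eq_of_hasFDerivAt {a b : ℝ} (hf : HasFDerivAt f (a • fst ℝ ℝ ℝ + b • snd ℝ ℝ ℝ) p) :
    pd2 f p = b := by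
  simp [pd2, hf.fderiv]

end PartialDerivatives

section Jets

variable (p : ℝ × ℝ) (a b c d e f : ℝ)

noncomputable def jetPoly (q : ℝ × ℝ) : ℝ :=
  a + b * (q.1 - p.1) + c * (q.2 - p.2)
    + d / 2 * (q.1 - p.1) ^ 2 + e * ((q.1 - p.1) * (q.2 - p.2)) + f / 2 * (q.2 - p.2) ^ 2

@[simp]
theorem jetPoly_self : jetPoly p a b c d e f p = a := by
  simp [jetPoly]

theorem contDiff_jetPoly {n : WithTop ℕ∞} : ContDiff ℝ n (jetPoly p a b c d e f) := by
  unfold jetPoly; fun_prop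

theorem hasFDerivAt_jetPoly (q : ℝ × ℝ) :
    HasFDerivAt (jetPoly p a b c d e f)
      (jetPoly p b d e 0 0 0 q • fst ℝ ℝ ℝ + jetPoly p c e f 0 0 0 q • snd ℝ ℝ ℝ) q := by
  have hx : HasFDerivAt (fun q : ℝ × ℝ => q.1 - p.1) (fst ℝ ℝ ℝ) q := hasFDerivAt_fst.sub_const _
  have hy : HasFDerivAt (fun q : ℝ × ℝ => q.2 - p.2) (snd ℝ ℝ ℝ) q := hasFDerivAt_snd.sub_const _
  refine ((((((hasFDerivAt_const a q).add (hx.const_mul b)).add (hy.const_mul c)).add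
    ((hx.pow 2).const_mul (d / 2))).add ((hx.mul hy).const_mul e)).add
    ((hy.pow 2).const_mul (f / 2))).congr_fderiv ?_
  ext <;> simp [jetPoly] <;> ring

@[simp]
theorem pd1_jetPoly : pd1 (jetPoly p a b c d e f) = jetPoly p b d e 0 0 0 :=
  funext fun q => pd1_eq_of_hasFDerivAt (hasFDerivAt_jetPoly p a b c d e f q)

@[simp]
theorem pd2_jetPoly : pd2 (jetPoly p a b c d e f) = jetPoly p c e f 0 0 0 :=
  funext fun q => pd2_eq_of_hasFDerivAt (hasFDerivAt_jetPoly p a b c d e f q)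

theorem exists_contDiff_two_jet :
    ∃ u : ℝ × ℝ → ℝ, ContDiff ℝ 2 u ∧ u p = a ∧ pd1 u p = b ∧ pd2 u p = c
      ∧ pd1 (pd1 u) p = d ∧ pd1 (pd2 u) p = e ∧ pd2 (pd2 u) p = f :=
  ⟨jetPoly p a b c d e f, contDiff_jetPoly p a b c d e f, by simp⟩

end Jets

section Operators

noncomputable def firstOrderOp (b₀ b₁ b₂ u : ℝ × ℝ → ℝ) (p : ℝ × ℝ) : ℝ :=
  b₀ p * u p + b₁ p * pd1 u p + b₂ p * pd2 u p

noncomputable def secondOrderOp (c₀ c₁ c₂ c₁₁ c₁₂ c₂₂ u : ℝ × ℝ → ℝ) (p : ℝ × ℝ) : ℝ :=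
  c₀ p * u p + c₁ p * pd1 u p + c₂ p * pd2 u p
    + c₁₁ p * pd1 (pd1 u) p + c₁₂ p * pd1 (pd2 u) p + c₂₂ p * pd2 (pd2 u) p

variable {a₀ a₁ a₂ b₀ b₁ b₂ u : ℝ × ℝ → ℝ} {p : ℝ × ℝ}

theorem fderiv_firstOrderOp_apply (hb₀ : DifferentiableAt ℝ b₀ p)
    (hb₁ : DifferentiableAt ℝ b₁ p) (hb₂ : DifferentiableAt ℝ b₂ p) (hu : ContDiffAt ℝ 2 u p)
    (v : ℝ × ℝ) :
    fderiv ℝ (firstOrderOp b₀ b₁ b₂ u) p v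
      = fderiv ℝ b₀ p v * u p + b₀ p * fderiv ℝ u p v
        + fderiv ℝ b₁ p v * pd1 u p + b₁ p * fderiv ℝ (pd1 u) p v
        + fderiv ℝ b₂ p v * pd2 u p + b₂ p * fderiv ℝ (pd2 u) p v := by
  have hu₀ : DifferentiableAt ℝ u p := hu.differentiableAt (by norm_num)
  have hu₁ : DifferentiableAt ℝ (pd1 u) p := hu.differentiableAt_fderiv_apply le_rfl _
  have hu₂ : DifferentiableAt ℝ (pd2 u) p := hu.differentiableAt_fderiv_apply le_rfl _
  unfold firstOrderOp
  rw [fderiv_fun_add ((hb₀.fun_mul hu₀).fun_add (hb₁.fun_mul hu₁)) (hb₂.fun_mul hu₂),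
    fderiv_fun_add (hb₀.fun_mul hu₀) (hb₁.fun_mul hu₁), fderiv_fun_mul hb₀ hu₀,
    fderiv_fun_mul hb₁ hu₁, fderiv_fun_mul hb₂ hu₂]
  simp only [add_apply, smul_apply, smul_eq_mul]
  ring

theorem firstOrderOp_firstOrderOp (hb₀ : DifferentiableAt ℝ b₀ p)
    (hb₁ : DifferentiableAt ℝ b₁ p) (hb₂ : DifferentiableAt ℝ b₂ p) (hu : ContDiffAt ℝ 2 u p) :
    firstOrderOp a₀ a₁ a₂ (firstOrderOp b₀ b₁ b₂ u) p
      = secondOrderOp (fun q => a₀ q * b₀ q + (a₁ q * pd1 b₀ q + a₂ q * pd2 b₀ q))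
          (fun q => a₀ q * b₁ q + a₁ q * b₀ q + (a₁ q * pd1 b₁ q + a₂ q * pd2 b₁ q))
          (fun q => a₀ q * b₂ q + a₂ q * b₀ q + (a₁ q * pd1 b₂ q + a₂ q * pd2 b₂ q))
          (fun q => a₁ q * b₁ q) (fun q => a₂ q * b₁ q + a₁ q * b₂ q) (fun q => a₂ q * b₂ q)
          u p := by
  have h₁ : pd1 (firstOrderOp b₀ b₁ b₂ u) p
      = pd1 b₀ p * u p + b₀ p * pd1 u p + pd1 b₁ p * pd1 u p + b₁ p * pd1 (pd1 u) p
        + pd1 b₂ p * pd2 u p + b₂ p * pd1 (pd2 u) p :=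
    fderiv_firstOrderOp_apply hb₀ hb₁ hb₂ hu (1, 0)
  have h₂ : pd2 (firstOrderOp b₀ b₁ b₂ u) p
      = pd2 b₀ p * u p + b₀ p * pd2 u p + pd2 b₁ p * pd1 u p + b₁ p * pd2 (pd1 u) p
        + pd2 b₂ p * pd2 u p + b₂ p * pd2 (pd2 u) p :=
    fderiv_firstOrderOp_apply hb₀ hb₁ hb₂ hu (0, 1)
  rw [firstOrderOp, h₁, h₂, ← pd1_pd2_comm hu le_rfl, secondOrderOp, firstOrderOp]
  ring

theorem coeffs_eq_of_secondOrderOp_eq {c₀ c₁ c₂ c₁₁ c₁₂ c₂₂ d₀ d₁ d₂ d₁₁ d₁₂ d₂₂ : ℝ × ℝ → ℝ}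
    (h : ∀ u, ContDiff ℝ 2 u →
      secondOrderOp c₀ c₁ c₂ c₁₁ c₁₂ c₂₂ u p = secondOrderOp d₀ d₁ d₂ d₁₁ d₁₂ d₂₂ u p) :
    c₀ p = d₀ p ∧ c₁ p = d₁ p ∧ c₂ p = d₂ p ∧ c₁₁ p = d₁₁ p ∧ c₁₂ p = d₁₂ p ∧ c₂₂ p = d₂₂ p := by
  have key (x₀ x₁ x₂ x₁₁ x₁₂ x₂₂ : ℝ) :
      c₀ p * x₀ + c₁ p * x₁ + c₂ p * x₂ + c₁₁ p * x₁₁ + c₁₂ p * x₁₂ + c₂₂ p * x₂₂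
        = d₀ p * x₀ + d₁ p * x₁ + d₂ p * x₂ + d₁₁ p * x₁₁ + d₁₂ p * x₁₂ + d₂₂ p * x₂₂ := by
    obtain ⟨u, hu, rfl, rfl, rfl, rfl, rfl, rfl⟩ := exists_contDiff_two_jet p x₀ x₁ x₂ x₁₁ x₁₂ x₂₂
    exact h u hu
  exact ⟨by simpa using key 1 0 0 0 0 0, by simpa using key 0 1 0 0 0 0,
    by simpa using key 0 0 1 0 0 0, by simpa using key 0 0 0 1 0 0,
    by simpa using key 0 0 0 0 1 0, by simpa using key 0 0 0 0 0 1⟩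

end Operators

theorem stmt_7 (g01 g11 g12 g21 g22 g23 g24 b10 b11 b12 b20 b21 b22 : ℝ × ℝ → ℝ)
    (hb20 : ContDiff ℝ 1 b20) (hb21 : ContDiff ℝ 1 b21) (hb22 : ContDiff ℝ 1 b22) :
    (∀ u : ℝ × ℝ → ℝ, ContDiff ℝ 2 u → ∀ p : ℝ × ℝ,
        g01 p * u p + g11 p * pd1 u p + g12 p * pd2 u p
          + g21 p * pd1 (pd1 u) p + (g22 p + g23 p) * pd1 (pd2 u) p + g24 p * pd2 (pd2 u) p
        = b10 p * (b20 p * u p + b21 p * pd1 u p + b22 p * pd2 u p)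
            + b11 p * pd1 (fun q => b20 q * u q + b21 q * pd1 u q + b22 q * pd2 u q) p
            + b12 p * pd2 (fun q => b20 q * u q + b21 q * pd1 u q + b22 q * pd2 u q) p)
      ↔ (∀ p : ℝ × ℝ,
          g21 p = b11 p * b21 p
          ∧ g22 p + g23 p = b12 p * b21 p + b11 p * b22 p
          ∧ g24 p = b12 p * b22 p
          ∧ g11 p = b10 p * b21 p + b11 p * b20 p + (b11 p * pd1 b21 p + b12 p * pd2 b21 p)
          ∧ g12 p = b10 p * b22 p + b12 p * b20 p + (b11 p * pd1 b22 p + b12 p * pd2 b22 p)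
          ∧ g01 p = b10 p * b20 p + (b11 p * pd1 b20 p + b12 p * pd2 b20 p)) := by
  change (∀ u : ℝ × ℝ → ℝ, ContDiff ℝ 2 u → ∀ p : ℝ × ℝ,
      secondOrderOp g01 g11 g12 g21 (g22 + g23) g24 u p
        = firstOrderOp b10 b11 b12 (firstOrderOp b20 b21 b22 u) p) ↔ _
  have hcomp (u : ℝ × ℝ → ℝ) (hu : ContDiff ℝ 2 u) (p : ℝ × ℝ) :=
    firstOrderOp_firstOrderOp (a₀ := b10) (a₁ := b11) (a₂ := b12)
      (hb20.differentiable one_ne_zero p) (hb21.differentiable one_ne_zero p)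
      (hb22.differentiable one_ne_zero p) hu.contDiffAt
  constructor
  · intro H p
    obtain ⟨h₀, h₁, h₂, h₁₁, h₁₂, h₂₂⟩ :=
      coeffs_eq_of_secondOrderOp_eq fun u hu => (H u hu p).trans (hcomp u hu p)
    exact ⟨h₁₁, h₁₂, h₂₂, h₁, h₂, h₀⟩
  · intro h u hu p
    obtain ⟨h₁₁, h₁₂, h₂₂, h₁, h₂, h₀⟩ := h p
    rw [hcomp u hu p, secondOrderOp, secondOrderOp, Pi.add_apply, h₀, h₁, h₂, h₁₁, h₁₂, h₂₂]
end

section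
/- Suppose the operator coefficients satisfy the two-variable factorization relations g21 = b11 b21, g22+g23 = b12 b21 + b11 b22, g24 = b12 b22 and the discriminant Δ = (g22+g23)² − 4 g21 g24 is nowhere zero on an open set. Then the linear system b21·Y + b11·Z = g11 − L(b21), b22·Y + b12·Z = g12 − L(b22) (unknowns Y, Z pointwise, L = b11∂₁ + b12∂₂) has a unique solution at each point, because its determinant b12·b21 − b11·b22 satisfies (b12 b21 − b11 b22)² = Δ ≠ 0. -/
theorem stmt_8 (g11 g12 g21 g22 g23 g24 b11 b12 b21 b22 : ℝ × ℝ → ℝ)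
    (s : Set (ℝ × ℝ)) (hs : IsOpen s)
    (h1 : ∀ p ∈ s, g21 p = b11 p * b21 p)
    (h2 : ∀ p ∈ s, g22 p + g23 p = b12 p * b21 p + b11 p * b22 p)
    (h3 : ∀ p ∈ s, g24 p = b12 p * b22 p)
    (hΔ : ∀ p ∈ s, (g22 p + g23 p) ^ 2 - 4 * g21 p * g24 p ≠ 0) :
    ∀ p ∈ s,
      (b12 p * b21 p - b11 p * b22 p) ^ 2 = (g22 p + g23 p) ^ 2 - 4 * g21 p * g24 p
      ∧ ∃! YZ : ℝ × ℝ,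
          b21 p * YZ.1 + b11 p * YZ.2 = g11 p - (b11 p * pd1 b21 p + b12 p * pd2 b21 p)
          ∧ b22 p * YZ.1 + b12 p * YZ.2 = g12 p - (b11 p * pd1 b22 p + b12 p * pd2 b22 p) := by
  intro p hp
  have hsq : (b12 p * b21 p - b11 p * b22 p) ^ 2
      = (g22 p + g23 p) ^ 2 - 4 * g21 p * g24 p := by
    rw [h1 p hp, h2 p hp, h3 p hp]; ring
  refine ⟨hsq, ?_⟩
  have hD : b12 p * b21 p - b11 p * b22 p ≠ 0 := by
    intro h
    apply hΔ p hp
    rw [← hsq, h]; ring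
  set D := b12 p * b21 p - b11 p * b22 p with hDdef
  set c1 := g11 p - (b11 p * pd1 b21 p + b12 p * pd2 b21 p) with hc1
  set c2 := g12 p - (b11 p * pd1 b22 p + b12 p * pd2 b22 p) with hc2
  refine ⟨((b12 p * c1 - b11 p * c2) / D, (b21 p * c2 - b22 p * c1) / D), ⟨?_, ?_⟩, ?_⟩
  · field_simp; ring
  · field_simp; ring
  · rintro ⟨Y, Z⟩ ⟨e1, e2⟩
    simp only at e1 e2
    have hY : Y = (b12 p * c1 - b11 p * c2) / D := by
      field_simp
      rw [← e1, ← e2]; ring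
    have hZ : Z = (b21 p * c2 - b22 p * c1) / D := by
      field_simp
      rw [← e1, ← e2]; ring
    simp [hY, hZ]
end
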